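/- Let T ⊂ R² be the reference triangle with vertices (0,0), (1,0), (0,1) and let F be its bottom edge. For 0 < ε < 1, let η_{F,ε}(x,y) = exp(−y/ε) x(1−x−y). For any w ∈ L²(T)² and any scalar g with ‖g‖_{L^∞(T)} ≤ M, the bound |⟨w, g ∇η_{F,ε}⟩_T| ≤ C M ε^{−1/2} ‖w‖_{L²(T)} holds with C independent of ε, w, g. -/

import Mathlib

/-!
On the triangle `|∇η_{F,ε}| ≤ 3 ε⁻¹ e^{-y/ε}`, since `ε⁻¹` enters only through the `y`-derivative
of the exponential. The integrand is thus bounded by `3 M ε⁻¹ e^{-y/ε} |w|`, and Cauchy–Schwarz with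
`∫_T e^{-2y/ε} ≤ ∫₀¹ e^{-2t/ε} dt ≤ ε/2` gains back the factor `ε^{1/2}`.
-/

open MeasureTheory

/-- The reference triangle with vertices `(0,0)`, `(1,0)`, `(0,1)`. -/
def refTriangle : Set (EuclideanSpace ℝ (Fin 2)) :=
  {p | 0 ≤ p 0 ∧ 0 ≤ p 1 ∧ p 0 + p 1 ≤ 1}

/-- The modified face bubble `η_{F,ε}(x,y) = exp(-y/ε) x(1-x-y)`. -/
noncomputable def expBubble (ε : ℝ) (p : EuclideanSpace ℝ (Fin 2)) : ℝ :=
  Real.exp (-(p 1 / ε)) * (p 0 * (1 - p 0 - p 1))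

theorem integral_mul_le_sqrt_mul_sqrt {α : Type*} [MeasurableSpace α] {μ : Measure α}
    {f g : α → ℝ} (hf0 : 0 ≤ᵐ[μ] f) (hg0 : 0 ≤ᵐ[μ] g) (hf : MemLp f 2 μ) (hg : MemLp g 2 μ) :
    ∫ x, f x * g x ∂μ ≤ √(∫ x, f x ^ 2 ∂μ) * √(∫ x, g x ^ 2 ∂μ) := by
  have h2 : ENNReal.ofReal 2 = 2 := by norm_num
  rw [← h2] at hf hg
  simpa only [Real.sqrt_eq_rpow, Real.rpow_two, one_div] using
    integral_mul_le_Lp_mul_Lq_of_nonneg Real.HolderConjugate.two_two hf0 hg0 hf hg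

/-- No integrability of `F` is needed: `integral_mono_of_nonneg` asks it only of the majorant. -/
theorem abs_integral_le_of_abs_le_mul_norm {α E : Type*} [MeasurableSpace α] {μ : Measure α}
    [NormedAddCommGroup E] {F h : α → ℝ} {w : α → E} {c : ℝ} (hc : 0 ≤ c)
    (hh0 : 0 ≤ᵐ[μ] h) (hh : MemLp h 2 μ) (hw : MemLp w 2 μ)
    (hF : ∀ᵐ x ∂μ, |F x| ≤ c * (h x * ‖w x‖)) :
    |∫ x, F x ∂μ| ≤ c * (√(∫ x, h x ^ 2 ∂μ) * √(∫ x, ‖w x‖ ^ 2 ∂μ)) := by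
  have hint : Integrable (fun x => h x * ‖w x‖) μ := hh.integrable_mul hw.norm
  calc |∫ x, F x ∂μ| ≤ ∫ x, c * (h x * ‖w x‖) ∂μ :=
        (abs_integral_le_integral_abs).trans <| integral_mono_of_nonneg
          (.of_forall fun _ => abs_nonneg _) (hint.const_mul c) hF
    _ = c * ∫ x, h x * ‖w x‖ ∂μ := integral_const_mul c _
    _ ≤ c * (√(∫ x, h x ^ 2 ∂μ) * √(∫ x, ‖w x‖ ^ 2 ∂μ)) :=
        mul_le_mul_of_nonneg_left (integral_mul_le_sqrt_mul_sqrt hh0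
          (.of_forall fun _ => norm_nonneg _) hh hw.norm) hc

lemma norm_toLp_pair_le (a b : ℝ) : ‖!₂[a, b]‖ ≤ |a| + |b| := by
  rw [EuclideanSpace.norm_eq, Fin.sum_univ_two]
  refine Real.sqrt_le_iff.mpr ⟨by positivity, ?_⟩
  simp only [Matrix.cons_val_zero, Matrix.cons_val_one, Real.norm_eq_abs]
  nlinarith [mul_nonneg (abs_nonneg a) (abs_nonneg b)]

lemma integral_exp_neg_div_sq_le {ε : ℝ} (hε : 0 < ε) :
    ∫ t in (0 : ℝ)..1, Real.exp (-(t / ε)) ^ 2 ≤ ε / 2 := by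
  have hc : -2 / ε ≠ 0 := by positivity
  have hexp : ∀ t, Real.exp (-(t / ε)) ^ 2 = Real.exp (-2 / ε * t) := fun t => by
    rw [← Real.exp_nat_mul]; ring_nf
  simp_rw [hexp]
  rw [intervalIntegral.integral_comp_mul_left Real.exp hc, integral_exp, smul_eq_mul, mul_zero,
    mul_one, Real.exp_zero, inv_div, div_neg]
  nlinarith [mul_pos hε (Real.exp_pos (-2 / ε))]

lemma isCompact_refTriangle : IsCompact refTriangle := by
  refine Metric.isCompact_of_isClosed_isBounded ?_ ?_
  · have h0 : Continuous fun p : EuclideanSpace ℝ (Fin 2) => p 0 := by fun_prop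
    have h1 : Continuous fun p : EuclideanSpace ℝ (Fin 2) => p 1 := by fun_prop
    exact (isClosed_le continuous_const h0).inter
      ((isClosed_le continuous_const h1).inter (isClosed_le (h0.add h1) continuous_const))
  · refine (Metric.isBounded_closedBall (x := 0) (r := 1)).subset fun p ⟨hx, hy, hxy⟩ => ?_
    rw [mem_closedBall_zero_iff, EuclideanSpace.norm_eq, Fin.sum_univ_two, Real.sqrt_le_one]
    simp only [Real.norm_eq_abs, sq_abs]
    nlinarith

instance : IsFiniteMeasure (volume.restrict refTriangle) :=
  isFiniteMeasure_restrict.mpr isCompact_refTriangle.measure_lt_top.ne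

lemma setIntegral_refTriangle_comp_le {f : ℝ → ℝ} (hf : Continuous f) (hf0 : ∀ t, 0 ≤ f t) :
    ∫ p in refTriangle, f (p 1) ≤ ∫ t in (0 : ℝ)..1, f t := by
  let ψ : EuclideanSpace ℝ (Fin 2) ≃ᵐ ℝ × ℝ :=
    (MeasurableEquiv.toLp 2 (Fin 2 → ℝ)).symm.trans MeasurableEquiv.finTwoArrow
  have hψ : MeasurePreserving ψ volume volume :=
    (volume_preserving_finTwoArrow ℝ).comp
      (EuclideanSpace.volume_preserving_symm_measurableEquiv_toLp (Fin 2))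
  let T : Set (ℝ × ℝ) := {z | 0 ≤ z.1 ∧ 0 ≤ z.2 ∧ z.1 + z.2 ≤ 1}
  have hT : T ⊆ Set.Icc (0 : ℝ) 1 ×ˢ Set.Icc (0 : ℝ) 1 := fun z ⟨hx, hy, hxy⟩ =>
    ⟨⟨hx, by linarith⟩, ⟨hy, by linarith⟩⟩
  calc ∫ p in refTriangle, f (p 1) = ∫ z in T, f z.2 :=
        hψ.setIntegral_preimage_emb ψ.measurableEmbedding (fun z => f z.2) T
    _ ≤ ∫ z in Set.Icc (0 : ℝ) 1 ×ˢ Set.Icc (0 : ℝ) 1, (1 : ℝ) * f z.2 := by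
        simp only [one_mul]
        refine setIntegral_mono_set ?_ (.of_forall fun z => hf0 z.2) hT.eventuallyLE
        exact (hf.comp continuous_snd).continuousOn.integrableOn_compact
          (isCompact_Icc.prod isCompact_Icc)
    _ = ∫ t in (0 : ℝ)..1, f t := by
        rw [Measure.volume_eq_prod, setIntegral_prod_mul (fun _ => (1 : ℝ)) f, setIntegral_const,
          intervalIntegral.integral_of_le zero_le_one, integral_Icc_eq_integral_Ioc]
        simp

lemma setIntegral_exp_neg_div_sq_le {ε : ℝ} (hε : 0 < ε) :
    ∫ p in refTriangle, Real.exp (-(p 1 / ε)) ^ 2 ≤ ε / 2 :=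
  (setIntegral_refTriangle_comp_le (f := fun t => Real.exp (-(t / ε)) ^ 2) (by fun_prop)
    fun _ => by positivity).trans (integral_exp_neg_div_sq_le hε)

lemma memLp_exp_neg_div_refTriangle {ε : ℝ} (hε : 0 < ε) (q : ENNReal) :
    MemLp (fun p : EuclideanSpace ℝ (Fin 2) => Real.exp (-(p 1 / ε))) q
      (volume.restrict refTriangle) := by
  refine .of_bound (by fun_prop) 1
    (ae_restrict_of_forall_mem isCompact_refTriangle.measurableSet fun p ⟨_, hy, _⟩ => ?_)
  rw [Real.norm_of_nonneg (Real.exp_pos _).le, Real.exp_le_one_iff, neg_nonpos]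
  positivity

lemma hasGradientAt_expBubble (ε : ℝ) (p : EuclideanSpace ℝ (Fin 2)) :
    HasGradientAt (expBubble ε)
      (Real.exp (-(p 1 / ε)) • !₂[1 - 2 * p 0 - p 1, -(p 0 * (1 + (1 - p 0 - p 1) / ε))]) p := by
  have h0 : HasFDerivAt (fun q : EuclideanSpace ℝ (Fin 2) => q 0)
      (PiLp.proj (𝕜 := ℝ) 2 (fun _ => ℝ) 0) p := PiLp.hasFDerivAt_apply 2 p 0
  have h1 : HasFDerivAt (fun q : EuclideanSpace ℝ (Fin 2) => q 1)
      (PiLp.proj (𝕜 := ℝ) 2 (fun _ => ℝ) 1) p := PiLp.hasFDerivAt_apply 2 p 1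
  have h1ε : HasFDerivAt (fun q : EuclideanSpace ℝ (Fin 2) => q 1 / ε)
      (ε⁻¹ • PiLp.proj (𝕜 := ℝ) 2 (fun _ => ℝ) 1) p := by
    simpa only [div_eq_mul_inv, mul_comm _ ε⁻¹] using h1.const_mul ε⁻¹
  rw [hasGradientAt_iff_hasFDerivAt]
  refine (h1ε.neg.exp.mul (h0.mul ((h0.const_sub 1).sub h1))).congr_fderiv ?_
  ext v
  simp only [Pi.neg_apply, Pi.sub_apply, Pi.mul_apply, smul_add, smul_neg, smul_eq_mul, map_smul,
    add_apply, smul_apply, sub_apply, neg_apply, PiLp.proj_apply,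
    InnerProductSpace.toDual_apply_apply, PiLp.inner_apply, RCLike.inner_apply, Real.ringHom_apply,
    Fin.sum_univ_two, Matrix.cons_val_zero, Matrix.cons_val_one]
  ring

lemma norm_gradient_expBubble_le {ε : ℝ} (hε : 0 < ε) (hε1 : ε < 1)
    {p : EuclideanSpace ℝ (Fin 2)} (hp : p ∈ refTriangle) :
    ‖gradient (expBubble ε) p‖ ≤ 3 / ε * Real.exp (-(p 1 / ε)) := by
  obtain ⟨hx, hy, hxy⟩ := hp
  rw [(hasGradientAt_expBubble ε p).gradient, norm_smul, Real.norm_of_nonneg (Real.exp_pos _).le,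
    mul_comm]
  gcongr
  refine (norm_toLp_pair_le _ _).trans ?_
  have h1 : |1 - 2 * p 0 - p 1| ≤ 1 := abs_le.mpr ⟨by linarith, by linarith⟩
  have h2 : |-(p 0 * (1 + (1 - p 0 - p 1) / ε))| ≤ 1 + 1 / ε := by
    have hz : 0 ≤ 1 - p 0 - p 1 := by linarith
    have : (1 - p 0 - p 1) / ε ≤ 1 / ε := by gcongr; linarith
    rw [abs_neg, abs_of_nonneg (by positivity), ← one_mul (1 + 1 / ε)]
    exact mul_le_mul (by linarith) (by linarith) (by positivity) zero_le_one
  have h3 : 1 ≤ 1 / ε := by rw [le_div_iff₀ hε]; linarith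
  linarith [show 3 / ε = 3 * (1 / ε) by ring]

/-- for any `w ∈ L²(T)²` and any scalar function `g` with
`‖g‖_{L^∞(T)} ≤ M`, `|⟨w, g ∇η_{F,ε}⟩_T| ≤ C M ε^{-1/2} ‖w‖_{L²(T)}` with `C`
independent of `ε`, `w`, `g`. -/
theorem stmt_16 :
    ∃ C > 0, ∀ ε : ℝ, 0 < ε → ε < 1 →
      ∀ (w : EuclideanSpace ℝ (Fin 2) → EuclideanSpace ℝ (Fin 2))
        (g : EuclideanSpace ℝ (Fin 2) → ℝ) (M : ℝ), 0 ≤ M →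
        MemLp w 2 (volume.restrict refTriangle) →
        AEStronglyMeasurable g (volume.restrict refTriangle) →
        (∀ x ∈ refTriangle, |g x| ≤ M) →
        |∫ x in refTriangle, (inner ℝ (w x) (g x • gradient (expBubble ε) x) : ℝ)| ≤
          C * M / Real.sqrt ε * Real.sqrt (∫ x in refTriangle, ‖w x‖ ^ 2) := by
  refine ⟨3, by norm_num, fun ε hε hε1 w g M hM hw _ hgM => ?_⟩
  set e : EuclideanSpace ℝ (Fin 2) → ℝ := fun p => Real.exp (-(p 1 / ε))
  set W := √(∫ x in refTriangle, ‖w x‖ ^ 2)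
  have hpointwise : ∀ᵐ x ∂volume.restrict refTriangle,
      |(inner ℝ (w x) (g x • gradient (expBubble ε) x) : ℝ)| ≤ 3 * M / ε * (e x * ‖w x‖) := by
    refine ae_restrict_of_forall_mem isCompact_refTriangle.measurableSet fun x hx => ?_
    calc |(inner ℝ (w x) (g x • gradient (expBubble ε) x) : ℝ)|
        ≤ ‖w x‖ * (|g x| * ‖gradient (expBubble ε) x‖) :=
          (abs_real_inner_le_norm _ _).trans_eq (by rw [norm_smul, Real.norm_eq_abs])
      _ ≤ ‖w x‖ * (M * (3 / ε * e x)) := by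
          gcongr
          exacts [hgM x hx, norm_gradient_expBubble_le hε hε1 hx]
      _ = 3 * M / ε * (e x * ‖w x‖) := by ring
  calc _ ≤ 3 * M / ε * (√(∫ x in refTriangle, e x ^ 2) * W) :=
        abs_integral_le_of_abs_le_mul_norm (by positivity)
          (.of_forall fun _ => (Real.exp_pos _).le) (memLp_exp_neg_div_refTriangle hε 2) hw
          hpointwise
    _ ≤ 3 * M / ε * (√ε * W) := by
        gcongr
        linarith [setIntegral_exp_neg_div_sq_le hε]
    _ = 3 * M / √ε * W := by
        field_simp
        rw [Real.sq_sqrt hε.le]
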